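/- Let L be the Leibniz superalgebra L(γ, β_{⌊(n+4)/2⌋}, ..., β_n, β) over ℂ with even basis x₁,...,x_n, odd basis y₁,...,y_{n+1}, and brackets [x_i,x₁]=x_{i+1}, [y_j,x₁]=y_{j+1} (1≤j≤n-1), [x_i,y₁]=½y_{i+1}, [y_j,y₁]=x_j, [y_{n+1},y_{n+1}]=γx_n, and the remaining products as in the statement of Lemma 3.2. Then L is nilpotent of nilindex 2n+1 = n + (n+1): the descending central series satisfies L^{2n} ≠ 0 and L^{2n+1} = 0. -/
import Mathlib


open Finset

/-- The descending central series: `dcs br 0 = L¹ = L`, `dcs br k = L^{k+1}`. -/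
def dcs (K : Type*) {V : Type*} [Field K] [AddCommGroup V] [Module K V]
    (br : V → V → V) : ℕ → Submodule K V
  | 0 => ⊤
  | k + 1 => Submodule.span K {v : V | ∃ a ∈ dcs K br k, ∃ b : V, v = br a b}

/-- The even basis vector `x_i` (`1 ≤ i ≤ n`). -/
def Xv (n : ℕ) (i : ℕ) : (Fin n → ℂ) × (Fin (n + 1) → ℂ) :=
  if h : 1 ≤ i ∧ i ≤ n then (Pi.single (⟨i - 1, by omega⟩ : Fin n) 1, 0) else 0

/-- The odd basis vector `y_j` (`1 ≤ j ≤ n+1`). -/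
def Yv (n : ℕ) (j : ℕ) : (Fin n → ℂ) × (Fin (n + 1) → ℂ) :=
  if h : 1 ≤ j ∧ j ≤ n + 1 then (0, Pi.single (⟨j - 1, by omega⟩ : Fin (n + 1)) 1) else 0

def Sx (n a : ℕ) : Set ((Fin n → ℂ) × (Fin (n + 1) → ℂ)) := Xv n '' Set.Icc a n
def Sy (n b c : ℕ) : Set ((Fin n → ℂ) × (Fin (n + 1) → ℂ)) := Yv n '' Set.Icc b c

lemma xv_mem_span (n a b c t : ℕ) (h1 : a ≤ t) (h2 : t ≤ n) :
    Xv n t ∈ Submodule.span ℂ (Sx n a ∪ Sy n b c) :=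
  Submodule.subset_span (Or.inl ⟨t, ⟨h1, h2⟩, rfl⟩)

lemma yv_mem_span (n a b c t : ℕ) (h1 : b ≤ t) (h2 : t ≤ c) :
    Yv n t ∈ Submodule.span ℂ (Sx n a ∪ Sy n b c) :=
  Submodule.subset_span (Or.inr ⟨t, ⟨h1, h2⟩, rfl⟩)

lemma mem_span_basis (n : ℕ) (v : (Fin n → ℂ) × (Fin (n + 1) → ℂ)) :
    v ∈ Submodule.span ℂ (Sx n 1 ∪ Sy n 1 (n + 1)) := by
  have hx : ∀ i : Fin n, ((Pi.single i 1 : Fin n → ℂ), (0 : Fin (n+1) → ℂ))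
      ∈ Submodule.span ℂ (Sx n 1 ∪ Sy n 1 (n + 1)) := by
    intro i
    have : Xv n ((i : ℕ) + 1) = ((Pi.single i 1 : Fin n → ℂ), (0 : Fin (n+1) → ℂ)) := by
      rw [Xv, dif_pos ⟨by omega, by omega⟩]
      congr 2
    rw [← this]
    exact xv_mem_span n 1 1 (n+1) _ (by omega) (by omega)
  have hy : ∀ j : Fin (n+1), ((0 : Fin n → ℂ), (Pi.single j 1 : Fin (n+1) → ℂ))
      ∈ Submodule.span ℂ (Sx n 1 ∪ Sy n 1 (n + 1)) := by
    intro j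
    have : Yv n ((j : ℕ) + 1) = ((0 : Fin n → ℂ), (Pi.single j 1 : Fin (n+1) → ℂ)) := by
      rw [Yv, dif_pos ⟨by omega, by omega⟩]
      congr 2
    rw [← this]
    exact yv_mem_span n 1 1 (n+1) _ (by omega) (by omega)
  have hv : v = (∑ i : Fin n, v.1 i • ((Pi.single i 1 : Fin n → ℂ), (0 : Fin (n+1) → ℂ)))
      + (∑ j : Fin (n+1), v.2 j • ((0 : Fin n → ℂ), (Pi.single j 1 : Fin (n+1) → ℂ))) := by
    apply Prod.ext
    · simp only [Prod.fst_add, Prod.fst_sum, Prod.smul_fst, smul_zero, Finset.sum_const_zero,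
        add_zero, smul_eq_mul]
      funext t
      simp [Finset.sum_apply, Pi.single_apply]
    · simp only [Prod.snd_add, Prod.snd_sum, Prod.smul_snd, smul_zero, Finset.sum_const_zero,
        zero_add, smul_eq_mul]
      funext t
      simp [Finset.sum_apply, Pi.single_apply]
  rw [hv]
  exact add_mem (sum_mem fun i _ => Submodule.smul_mem _ _ (hx i))
    (sum_mem fun j _ => Submodule.smul_mem _ _ (hy j))

lemma br_span {n : ℕ}
    (br : ((Fin n → ℂ) × (Fin (n + 1) → ℂ)) →ₗ[ℂ]
        ((Fin n → ℂ) × (Fin (n + 1) → ℂ)) →ₗ[ℂ] ((Fin n → ℂ) × (Fin (n + 1) → ℂ)))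
    (S : Set ((Fin n → ℂ) × (Fin (n + 1) → ℂ)))
    (W : Submodule ℂ ((Fin n → ℂ) × (Fin (n + 1) → ℂ)))
    (hgen : ∀ g ∈ S, ∀ e ∈ (Sx n 1 ∪ Sy n 1 (n + 1)), br g e ∈ W) :
    ∀ a ∈ Submodule.span ℂ S, ∀ b, br a b ∈ W := by
  have step1 : ∀ g ∈ S, ∀ b, br g b ∈ W := by
    intro g hg b
    induction mem_span_basis n b using Submodule.span_induction with
    | mem e he => exact hgen g hg e he
    | zero => rw [map_zero]; exact zero_mem W
    | add x y _ _ hx hy => rw [map_add]; exact add_mem hx hy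
    | smul r x _ hx => rw [map_smul]; exact Submodule.smul_mem W r hx
  intro a ha b
  induction ha using Submodule.span_induction with
  | mem g hg => exact step1 g hg b
  | zero => rw [map_zero, LinearMap.zero_apply]; exact zero_mem W
  | add x y _ _ hx hy => rw [map_add, LinearMap.add_apply]; exact add_mem hx hy
  | smul r x _ hx => rw [map_smul, LinearMap.smul_apply]; exact Submodule.smul_mem W r hx

lemma dcs_succ_le {n : ℕ} (br' : ((Fin n → ℂ) × (Fin (n + 1) → ℂ)) → ((Fin n → ℂ) × (Fin (n + 1) → ℂ)) → ((Fin n → ℂ) × (Fin (n + 1) → ℂ)))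
    (m : ℕ) (W : Submodule ℂ ((Fin n → ℂ) × (Fin (n + 1) → ℂ)))
    (h : ∀ a ∈ dcs ℂ br' m, ∀ b, br' a b ∈ W) :
    dcs ℂ br' (m + 1) ≤ W := by
  rw [dcs]
  exact Submodule.span_le.2 (by rintro v ⟨a, ha, b, rfl⟩; exact h a ha b)

lemma mem_dcs_succ {n : ℕ} (br' : ((Fin n → ℂ) × (Fin (n + 1) → ℂ)) → ((Fin n → ℂ) × (Fin (n + 1) → ℂ)) → ((Fin n → ℂ) × (Fin (n + 1) → ℂ)))
    (m : ℕ) {u : ((Fin n → ℂ) × (Fin (n + 1) → ℂ))} (w : ((Fin n → ℂ) × (Fin (n + 1) → ℂ)))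
    (hu : u ∈ dcs ℂ br' m) : br' u w ∈ dcs ℂ br' (m + 1) := by
  rw [dcs]
  exact Submodule.subset_span ⟨u, hu, w, rfl⟩
/-- The superalgebra `L(γ, β_{⌊(n+4)/2⌋}, …, β_n, β)` of Lemma 3.2 is nilpotent
of nilindex `2n + 1 = n + (n+1)`: any bilinear bracket with the prescribed
structure constants satisfies `L^{2n} ≠ 0` and `L^{2n+1} = 0`. -/
theorem family_L_gamma_beta_nilindex
    (n : ℕ) (hn : 2 ≤ n) (γ : ℂ) (β : ℕ → ℂ) (βl : ℂ)
    (br : ((Fin n → ℂ) × (Fin (n + 1) → ℂ)) →ₗ[ℂ]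
        ((Fin n → ℂ) × (Fin (n + 1) → ℂ)) →ₗ[ℂ] ((Fin n → ℂ) × (Fin (n + 1) → ℂ)))
    (h1 : ∀ i, 1 ≤ i → i ≤ n - 1 → br (Xv n i) (Xv n 1) = Xv n (i + 1))
    (h2 : ∀ j, 1 ≤ j → j ≤ n - 1 → br (Yv n j) (Xv n 1) = Yv n (j + 1))
    (h3 : ∀ i, 1 ≤ i → i ≤ n - 1 → br (Xv n i) (Yv n 1) = (2⁻¹ : ℂ) • Yv n (i + 1))
    (h4 : ∀ j, 1 ≤ j → j ≤ n → br (Yv n j) (Yv n 1) = Xv n j)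
    (h5 : br (Yv n (n + 1)) (Yv n (n + 1)) = γ • Xv n n)
    (h6 : ∀ i, 1 ≤ i → i ≤ (n - 1) / 2 →
      br (Xv n i) (Yv n (n + 1)) = ∑ k ∈ Icc ((n + 4) / 2) (n + 1 - i), β k • Yv n (k - 1 + i))
    (h7 : br (Yv n 1) (Yv n (n + 1))
      = (-2 : ℂ) • ∑ k ∈ Icc ((n + 4) / 2) n, β k • Xv n (k - 1) + βl • Xv n n)
    (h8 : ∀ j, 2 ≤ j → j ≤ (n + 1) / 2 →
      br (Yv n j) (Yv n (n + 1))
        = (-2 : ℂ) • ∑ k ∈ Icc ((n + 4) / 2) (n + 2 - j), β k • Xv n (k - 2 + j))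
    (h9 : br (Xv n n) (Xv n 1) = 0)
    (h10 : ∀ i j, 1 ≤ i → i ≤ n → 2 ≤ j → j ≤ n → br (Xv n i) (Xv n j) = 0)
    (h11 : ∀ j i, 1 ≤ j → j ≤ n + 1 → 2 ≤ i → i ≤ n → br (Yv n j) (Xv n i) = 0)
    (h12 : br (Yv n n) (Xv n 1) = 0) (h13 : br (Yv n (n + 1)) (Xv n 1) = 0)
    (h14 : br (Xv n n) (Yv n 1) = 0) (h15 : br (Yv n (n + 1)) (Yv n 1) = 0)
    (h16 : ∀ i j, 1 ≤ i → i ≤ n → 2 ≤ j → j ≤ n → br (Xv n i) (Yv n j) = 0)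
    (h17 : ∀ i, (n - 1) / 2 < i → i ≤ n → br (Xv n i) (Yv n (n + 1)) = 0)
    (h18 : ∀ i j, 1 ≤ i → i ≤ n + 1 → 2 ≤ j → j ≤ n → br (Yv n i) (Yv n j) = 0)
    (h19 : ∀ j, (n + 1) / 2 < j → j ≤ n → br (Yv n j) (Yv n (n + 1)) = 0)
    (h20 : ∀ j, 1 ≤ j → j ≤ n → br (Yv n (n + 1)) (Yv n j) = 0) :
    dcs ℂ (fun u v => br u v) (2 * n) = ⊥ ∧
    dcs ℂ (fun u v => br u v) (2 * n - 1) ≠ ⊥ := by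

  have is2 : (2:ℂ) ≠ 0 := two_ne_zero
  set br' : ((Fin n → ℂ) × (Fin (n + 1) → ℂ)) → ((Fin n → ℂ) × (Fin (n + 1) → ℂ)) → ((Fin n → ℂ) × (Fin (n + 1) → ℂ)) := fun u v => br u v with hbr'
  -- master step lemma
  have master : ∀ (a b c a' b' c' m : ℕ), 1 ≤ a → 1 ≤ b → c ≤ n + 1 → n ≤ c' →
      a' ≤ a + 1 → a' ≤ b → b' ≤ a + 1 → b' ≤ b + 1 → 2 ≤ b' →
      (n + 1 ≤ c → a' ≤ n) → (b = 1 → a' = 1) →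
      dcs ℂ br' m ≤ Submodule.span ℂ (Sx n a ∪ Sy n b c) →
      dcs ℂ br' (m + 1) ≤ Submodule.span ℂ (Sx n a' ∪ Sy n b' c') := by
    intro a b c a' b' c' m ha hb hc hc' k1 k2 k3 k4 kb' htop hone hm
    apply dcs_succ_le
    intro u hu v
    refine br_span br _ _ ?_ u (hm hu) v
    rintro g (⟨i, ⟨hi1, hi2⟩, rfl⟩ | ⟨j, ⟨hj1, hj2⟩, rfl⟩) e
      (⟨p, ⟨hp1, hp2⟩, rfl⟩ | ⟨q, ⟨hq1, hq2⟩, rfl⟩)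
    · -- g = x_i, e = x_p
      rcases eq_or_lt_of_le hp1 with hp | hp
      · obtain rfl : p = 1 := hp.symm
        by_cases hi : i ≤ n - 1
        · rw [h1 i (by omega) hi]
          exact xv_mem_span n a' b' c' _ (by omega) (by omega)
        · obtain rfl : i = n := by omega
          rw [h9]; exact zero_mem _
      · rw [h10 i p (by omega) hi2 (by omega) hp2]; exact zero_mem _
    · -- g = x_i, e = y_q
      rcases eq_or_lt_of_le hq1 with hq | hq
      · obtain rfl : q = 1 := hq.symm
        by_cases hi : i ≤ n - 1
        · rw [h3 i (by omega) hi]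
          exact Submodule.smul_mem _ _ (yv_mem_span n a' b' c' _ (by omega) (by omega))
        · obtain rfl : i = n := by omega
          rw [h14]; exact zero_mem _
      · by_cases hq' : q ≤ n
        · rw [h16 i q (by omega) hi2 (by omega) hq']; exact zero_mem _
        · obtain rfl : q = n + 1 := by omega
          by_cases hi : i ≤ (n - 1) / 2
          · rw [h6 i (by omega) hi]
            refine sum_mem fun k hk => ?_
            rw [Finset.mem_Icc] at hk
            exact Submodule.smul_mem _ _ (yv_mem_span n a' b' c' _ (by omega) (by omega))
          · rw [h17 i (by omega) hi2]; exact zero_mem _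
    · -- g = y_j, e = x_p
      by_cases hj : j ≤ n
      · rcases eq_or_lt_of_le hp1 with hp | hp
        · obtain rfl : p = 1 := hp.symm
          by_cases hj' : j ≤ n - 1
          · rw [h2 j (by omega) hj']
            exact yv_mem_span n a' b' c' _ (by omega) (by omega)
          · obtain rfl : j = n := by omega
            rw [h12]; exact zero_mem _
        · rw [h11 j p (by omega) (by omega) (by omega) hp2]; exact zero_mem _
      · obtain rfl : j = n + 1 := by omega
        rcases eq_or_lt_of_le hp1 with hp | hp
        · obtain rfl : p = 1 := hp.symm
          rw [h13]; exact zero_mem _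
        · rw [h11 (n+1) p (by omega) le_rfl (by omega) hp2]; exact zero_mem _
    · -- g = y_j, e = y_q
      by_cases hj : j ≤ n
      · rcases eq_or_lt_of_le hq1 with hq | hq
        · obtain rfl : q = 1 := hq.symm
          rw [h4 j (by omega) hj]
          exact xv_mem_span n a' b' c' _ (by omega) (by omega)
        · by_cases hq' : q ≤ n
          · rw [h18 j q (by omega) (by omega) (by omega) hq']; exact zero_mem _
          · obtain rfl : q = n + 1 := by omega
            by_cases hj1' : j = 1
            · subst hj1'
              have ha1 : a' = 1 := hone (by omega)
              rw [h7]
              refine add_mem (Submodule.smul_mem _ _ (sum_mem fun k hk => ?_))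
                (Submodule.smul_mem _ _ (xv_mem_span n a' b' c' _ (by omega) le_rfl))
              rw [Finset.mem_Icc] at hk
              exact Submodule.smul_mem _ _ (xv_mem_span n a' b' c' _ (by omega) (by omega))
            · by_cases hj2' : j ≤ (n + 1) / 2
              · rw [h8 j (by omega) hj2']
                refine Submodule.smul_mem _ _ (sum_mem fun k hk => ?_)
                rw [Finset.mem_Icc] at hk
                exact Submodule.smul_mem _ _ (xv_mem_span n a' b' c' _ (by omega) (by omega))
              · rw [h19 j (by omega) hj]; exact zero_mem _
      · obtain rfl : j = n + 1 := by omega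
        have han : a' ≤ n := htop (by omega)
        rcases eq_or_lt_of_le hq1 with hq | hq
        · obtain rfl : q = 1 := hq.symm
          rw [h15]; exact zero_mem _
        · by_cases hq' : q ≤ n
          · rw [h18 (n+1) q (by omega) le_rfl (by omega) hq']; exact zero_mem _
          · obtain rfl : q = n + 1 := by omega
            rw [h5]
            exact Submodule.smul_mem _ _ (xv_mem_span n a' b' c' _ han le_rfl)
  -- the chain of upper bounds
  have base1 : dcs ℂ br' 1 ≤ Submodule.span ℂ (Sx n 1 ∪ Sy n 2 (n + 1)) := by
    refine master 1 1 (n+1) 1 2 (n+1) 0 le_rfl le_rfl le_rfl (by omega) (by omega) le_rfl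
      (by omega) (by omega) le_rfl (by omega) (fun _ => rfl) ?_
    intro v _
    exact mem_span_basis n v
  have base2 : dcs ℂ br' 2 ≤ Submodule.span ℂ (Sx n 2 ∪ Sy n 2 n) := by
    refine master 1 2 (n+1) 2 2 n 1 le_rfl (by omega) le_rfl le_rfl le_rfl le_rfl le_rfl
      (by omega) le_rfl (by intro _; omega) (by intro h; omega) base1
  have chain : ∀ k, 1 ≤ k → k ≤ n →
      dcs ℂ br' (2 * k) ≤ Submodule.span ℂ (Sx n (k+1) ∪ Sy n (k+1) n) := by
    intro k hk1
    induction k, hk1 using Nat.le_induction with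
    | base => intro _; exact base2
    | succ k hk ih =>
      intro hkn
      have sA := ih (by omega)
      have sB := master (k+1) (k+1) n (k+1) (k+2) n (2*k) (by omega) (by omega) (by omega)
        le_rfl (by omega) le_rfl (by omega) (by omega) (by omega)
        (by intro h; omega) (by intro h; omega) sA
      have sC := master (k+1) (k+2) n (k+2) (k+2) n (2*k+1) (by omega) (by omega) (by omega)
        le_rfl (by omega) le_rfl (by omega) (by omega) (by omega)
        (by intro h; omega) (by intro h; omega) sB
      have : 2 * (k + 1) = 2 * k + 1 + 1 := by omega
      rw [this]
      exact sC
  have top_zero : dcs ℂ br' (2 * n) = ⊥ := by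
    have h := chain n (by omega) le_rfl
    have he : (Sx n (n+1) ∪ Sy n (n+1) n) = (∅ : Set _) := by
      have hicc : Set.Icc (n+1) n = (∅ : Set ℕ) := Set.Icc_eq_empty (by omega)
      rw [Sx, Sy, hicc]
      simp
    rw [he, Submodule.span_empty, le_bot_iff] at h
    exact h
  -- lower bound
  have hx : ∀ j, j ≤ n - 1 → Xv n (j + 1) ∈ dcs ℂ br' (2 * j + 1) := by
    intro j
    induction j with
    | zero =>
      intro _
      have e : Xv n 1 = br' (Yv n 1) (Yv n 1) := (h4 1 le_rfl (by omega)).symm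
      rw [e]
      exact mem_dcs_succ br' 0 (Yv n 1) (by rw [dcs]; trivial)
    | succ j ih =>
      intro hj
      have hxj := ih (by omega)
      have hy : Yv n (j + 2) ∈ dcs ℂ br' (2 * j + 2) := by
        have e : Yv n (j + 2) = (2:ℂ) • br' (Xv n (j+1)) (Yv n 1) := by
          show Yv n (j+2) = (2:ℂ) • br (Xv n (j+1)) (Yv n 1)
          rw [h3 (j+1) (by omega) (by omega), smul_smul]
          norm_num
        rw [e]
        exact Submodule.smul_mem _ _ (mem_dcs_succ br' (2*j+1) (Yv n 1) hxj)
      have e : Xv n (j + 2) = br' (Yv n (j+2)) (Yv n 1) := (h4 (j+2) (by omega) (by omega)).symm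
      have heq : 2 * (j + 1) + 1 = (2 * j + 2) + 1 := by omega
      rw [show j + 1 + 1 = j + 2 from rfl, heq, e]
      exact mem_dcs_succ br' (2*j+2) (Yv n 1) hy
  have hxn : Xv n n ∈ dcs ℂ br' (2 * n - 1) := by
    have h := hx (n-1) le_rfl
    have e1 : n - 1 + 1 = n := by omega
    have e2 : 2 * (n-1) + 1 = 2 * n - 1 := by omega
    rw [e1, e2] at h
    exact h
  have hxn0 : Xv n n ≠ 0 := by
    rw [Xv, dif_pos ⟨by omega, le_rfl⟩]
    intro h
    have h1' := congrFun (congrArg Prod.fst h) ⟨n-1, by omega⟩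
    simp at h1'
  refine ⟨top_zero, fun hbot => hxn0 ?_⟩
  rw [hbot] at hxn
  simpa using hxn
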